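/- arXiv:1412.3355 — 2 statements merged into one kernel-verified Lean document; each statement's English description precedes it below -/
import Mathlib

section
/- Let $Q$ be a Dirichlet form with generator $L$, and suppose for every $u \in D(L) \cap L^1(X,m)$ with $Lu \in L^1(X,m)$ one has $\int_X Lu\, dm = 0$. Assume there exists a sequence $(e_n) \subset D(Q)$ with $0 \leq e_n \leq 1$ and $e_n \to 1$ m-a.e., and a strictly positive $f \in L^1 \cap L^2$. Then $(L+1)^{-1}1 = 1$, i.e., $Q$ is stochastically complete. -/
/-!
Apply Green's formula to `v = G f`: since `L v = f - v`, it gives `∫ v = ∫ f`. Approximate `1`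
from below by `wₙ = min 1 (n f) ∈ L¹ ∩ L²`; by symmetry of `G` and dominated convergence,
`∫ f · G 1 = lim ∫ f · G wₙ = lim ∫ v · wₙ = ∫ v = ∫ f`. Since `G 1 ≤ 1` and `f > 0`, this
forces `G 1 = 1` almost everywhere.
-/

open MeasureTheory Filter Topology

section General

variable {X : Type*} [MeasurableSpace X] {μ : Measure X}

theorem tendsto_integral_mul_of_bounded_of_tendsto_ae {g : X → ℝ} {h : ℕ → X → ℝ}
    {h₀ : X → ℝ} {C : ℝ} (hg : Integrable g μ) (hmeas : ∀ n, AEStronglyMeasurable (h n) μ)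
    (hbound : ∀ n, ∀ᵐ x ∂μ, ‖h n x‖ ≤ C)
    (hlim : ∀ᵐ x ∂μ, Tendsto (fun n => h n x) atTop (𝓝 (h₀ x))) :
    Tendsto (fun n => ∫ x, g x * h n x ∂μ) atTop (𝓝 (∫ x, g x * h₀ x ∂μ)) := by
  refine tendsto_integral_of_dominated_convergence (fun x => C * ‖g x‖)
    (fun n => hg.aestronglyMeasurable.mul (hmeas n)) (hg.norm.const_mul C) (fun n => ?_) ?_
  · filter_upwards [hbound n] with x hx
    rw [norm_mul, mul_comm]
    exact mul_le_mul_of_nonneg_right hx (norm_nonneg _)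
  · filter_upwards [hlim] with x hx
    exact hx.const_mul (g x)

theorem ae_norm_le_one_of_ae_nonneg_of_le_one {g : X → ℝ}
    (hg : ∀ᵐ x ∂μ, 0 ≤ g x ∧ g x ≤ 1) : ∀ᵐ x ∂μ, ‖g x‖ ≤ 1 :=
  hg.mono fun _ hx => (Real.norm_of_nonneg hx.1).trans_le hx.2

theorem ae_eq_one_of_integral_mul_eq_integral {f g : X → ℝ} (hf : Integrable f μ)
    (hfpos : ∀ᵐ x ∂μ, 0 < f x) (hfg : Integrable (fun x => f x * g x) μ)
    (hg : ∀ᵐ x ∂μ, g x ≤ 1) (heq : ∫ x, f x * g x ∂μ = ∫ x, f x ∂μ) :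
    g =ᵐ[μ] fun _ => 1 := by
  have hnonneg : 0 ≤ᵐ[μ] fun x => f x - f x * g x := by
    filter_upwards [hfpos, hg] with x hfx hgx
    simp only [Pi.zero_apply, sub_nonneg]
    exact mul_le_of_le_one_right hfx.le hgx
  have hzero : (fun x => f x - f x * g x) =ᵐ[μ] 0 := by
    refine (integral_eq_zero_iff_of_nonneg_ae hnonneg (hf.sub hfg)).1 ?_
    rw [integral_sub hf hfg, heq, sub_self]
  filter_upwards [hzero, hfpos] with x hx hfx
  have : f x * g x = f x * 1 := by
    simp only [Pi.zero_apply] at hx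
    linarith
  exact mul_left_cancel₀ hfx.ne' this

theorem integral_eq_of_integral_eq_zero_of_ae_eq_sub {f u Lu : X → ℝ} (hf : Integrable f μ)
    (hu : Integrable u μ) (hLu : Lu =ᵐ[μ] f - u) (hzero : ∫ x, Lu x ∂μ = 0) :
    ∫ x, u x ∂μ = ∫ x, f x ∂μ := by
  rw [integral_congr_ae hLu, Pi.sub_def, integral_sub hf hu] at hzero
  linarith

end General

section UnitTrunc

variable {X : Type*} {f : X → ℝ}

def unitTrunc (f : X → ℝ) (n : ℕ) : X → ℝ := fun x => min 1 (n * f x)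

theorem unitTrunc_nonneg {x : X} (hx : 0 ≤ f x) (n : ℕ) : 0 ≤ unitTrunc f n x :=
  le_min zero_le_one (by positivity)

theorem unitTrunc_le_one (n : ℕ) (x : X) : unitTrunc f n x ≤ 1 :=
  min_le_left _ _

theorem monotone_unitTrunc {x : X} (hx : 0 ≤ f x) : Monotone fun n => unitTrunc f n x :=
  fun _ _ hab => min_le_min le_rfl (mul_le_mul_of_nonneg_right (Nat.cast_le.2 hab) hx)

theorem tendsto_unitTrunc {x : X} (hx : 0 < f x) :
    Tendsto (fun n => unitTrunc f n x) atTop (𝓝 1) := by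
  obtain ⟨N, hN⟩ := exists_nat_ge (1 / f x)
  refine tendsto_const_nhds.congr' ?_
  filter_upwards [eventually_ge_atTop N] with n hn
  have : 1 ≤ (n : ℝ) * f x := (div_le_iff₀ hx).1 (hN.trans (Nat.cast_le.2 hn))
  exact (min_eq_left this).symm

theorem MeasureTheory.MemLp.unitTrunc [MeasurableSpace X] {μ : Measure X} {p : ENNReal}
    (hf : MemLp f p μ) (hpos : ∀ᵐ x ∂μ, 0 ≤ f x) (n : ℕ) : MemLp (unitTrunc f n) p μ := by
  refine (hf.const_mul (n : ℝ)).of_le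
    (aemeasurable_const.min (hf.aemeasurable.const_mul _)).aestronglyMeasurable ?_
  filter_upwards [hpos] with x hx
  rw [Real.norm_of_nonneg (unitTrunc_nonneg hx n)]
  exact (min_le_right _ _).trans (le_abs_self _)

theorem MeasureTheory.Integrable.unitTrunc [MeasurableSpace X] {μ : Measure X}
    (hf : Integrable f μ) (hpos : ∀ᵐ x ∂μ, 0 ≤ f x) (n : ℕ) : Integrable (unitTrunc f n) μ :=
  memLp_one_iff_integrable.1 ((memLp_one_iff_integrable.2 hf).unitTrunc hpos n)

end UnitTrunc

theorem stmt_13_general {X : Type*} [MeasurableSpace X] (μ : Measure X)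
    (DL : Set (X → ℝ)) (Lop : (X → ℝ) → (X → ℝ))
    (G : (X → ℝ) → (X → ℝ))
    -- the resolvent property on `L¹ ∩ L²`
    (hres : ∀ g : X → ℝ, Integrable g μ → MemLp g 2 μ →
      G g ∈ DL ∧ Integrable (G g) μ ∧ MemLp (G g) 2 μ ∧ Lop (G g) =ᵐ[μ] g - G g)
    -- symmetry of the resolvent
    (hsym : ∀ u v : X → ℝ, MemLp u 2 μ → MemLp v 2 μ →
      ∫ x, u x * G v x ∂μ = ∫ x, G u x * v x ∂μ)
    -- Markov property and monotonicity of the extended resolvent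
    (hmarkov : ∀ u : X → ℝ, (∀ᵐ x ∂μ, 0 ≤ u x ∧ u x ≤ 1) →
      ∀ᵐ x ∂μ, 0 ≤ G u x ∧ G u x ≤ 1)
    -- continuity of the extended resolvent along monotone a.e. limits
    (hcont : ∀ (u : ℕ → X → ℝ) (v : X → ℝ),
      (∀ᵐ x ∂μ, Monotone fun n => u n x) →
      (∀ᵐ x ∂μ, Tendsto (fun n => u n x) atTop (𝓝 (v x))) →
      ∀ᵐ x ∂μ, Tendsto (fun n => G (u n) x) atTop (𝓝 (G v x)))
    -- the Green formula hypothesis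
    (hGreen : ∀ u ∈ DL, Integrable u μ → Integrable (Lop u) μ → ∫ x, Lop u x ∂μ = 0)
    -- a strictly positive `f ∈ L¹ ∩ L²`
    (f : X → ℝ) (hfpos : ∀ᵐ x ∂μ, 0 < f x)
    (hf1 : Integrable f μ) (hf2 : MemLp f 2 μ) :
    G (fun _ => 1) =ᵐ[μ] fun _ => 1 := by
  have hfnonneg : ∀ᵐ x ∂μ, 0 ≤ f x := hfpos.mono fun _ hx => hx.le
  have hw1 n : Integrable (unitTrunc f n) μ := hf1.unitTrunc hfnonneg n
  have hw2 n : MemLp (unitTrunc f n) 2 μ := hf2.unitTrunc hfnonneg n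
  have hw01 n : ∀ᵐ x ∂μ, 0 ≤ unitTrunc f n x ∧ unitTrunc f n x ≤ 1 :=
    hfnonneg.mono fun _ hx => ⟨unitTrunc_nonneg hx n, unitTrunc_le_one n _⟩
  have hwlim : ∀ᵐ x ∂μ, Tendsto (fun n => unitTrunc f n x) atTop (𝓝 1) :=
    hfpos.mono fun _ => tendsto_unitTrunc
  obtain ⟨hvDL, hvInt, -, hLv⟩ := hres f hf1 hf2
  have hGw n := hres _ (hw1 n) (hw2 n)
  have hGwlim := hcont (unitTrunc f) (fun _ => 1) (hfnonneg.mono fun _ => monotone_unitTrunc) hwlim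
  have hG1meas : AEStronglyMeasurable (G fun _ => 1) μ :=
    aestronglyMeasurable_of_tendsto_ae atTop (fun n => (hGw n).2.1.aestronglyMeasurable) hGwlim
  have hG1 := hmarkov (fun _ => 1) (ae_of_all _ fun _ => ⟨zero_le_one, le_rfl⟩)
  have hlimf : Tendsto (fun n => ∫ x, f x * G (unitTrunc f n) x ∂μ) atTop
      (𝓝 (∫ x, f x * G (fun _ => 1) x ∂μ)) :=
    tendsto_integral_mul_of_bounded_of_tendsto_ae hf1 (fun n => (hGw n).2.1.aestronglyMeasurable)
      (fun n => ae_norm_le_one_of_ae_nonneg_of_le_one (hmarkov _ (hw01 n))) hGwlim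
  have hlimv : Tendsto (fun n => ∫ x, G f x * unitTrunc f n x ∂μ) atTop (𝓝 (∫ x, G f x ∂μ)) := by
    simpa using tendsto_integral_mul_of_bounded_of_tendsto_ae hvInt
      (fun n => (hw1 n).aestronglyMeasurable)
      (fun n => ae_norm_le_one_of_ae_nonneg_of_le_one (hw01 n)) hwlim
  have hintv : ∫ x, G f x ∂μ = ∫ x, f x ∂μ :=
    integral_eq_of_integral_eq_zero_of_ae_eq_sub hf1 hvInt hLv
      (hGreen _ hvDL hvInt ((hf1.sub hvInt).congr hLv.symm))
  have hkey : ∫ x, f x * G (fun _ => 1) x ∂μ = ∫ x, f x ∂μ :=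
    (tendsto_nhds_unique (hlimf.congr fun n => hsym f _ hf2 (hw2 n)) hlimv).trans hintv
  exact ae_eq_one_of_integral_mul_eq_integral hf1 hfpos
    (hf1.mul_bdd hG1meas (ae_norm_le_one_of_ae_nonneg_of_le_one hG1)) (hG1.mono fun _ hx => hx.2) hkey

/-- Characterization of stochastic completeness: if the Green formula
`∫ Lu dm = 0` holds for all `u ∈ D(L) ∩ L¹` with `Lu ∈ L¹`, then the
(extended) resolvent `G = (L+1)⁻¹` satisfies `G 1 = 1`. -/
theorem stmt_13 {X : Type*} [MeasurableSpace X] (μ : Measure X) [SigmaFinite μ]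
    (DL : Set (X → ℝ)) (Lop : (X → ℝ) → (X → ℝ))
    (DQ : Set (X → ℝ)) (G : (X → ℝ) → (X → ℝ))
    -- the resolvent property on `L¹ ∩ L²`
    (hres : ∀ g : X → ℝ, Integrable g μ → MemLp g 2 μ →
      G g ∈ DL ∧ Integrable (G g) μ ∧ MemLp (G g) 2 μ ∧ Lop (G g) =ᵐ[μ] g - G g)
    -- symmetry of the resolvent
    (hsym : ∀ u v : X → ℝ, MemLp u 2 μ → MemLp v 2 μ →
      ∫ x, u x * G v x ∂μ = ∫ x, G u x * v x ∂μ)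
    -- Markov property and monotonicity of the extended resolvent
    (hmarkov : ∀ u : X → ℝ, (∀ᵐ x ∂μ, 0 ≤ u x ∧ u x ≤ 1) →
      ∀ᵐ x ∂μ, 0 ≤ G u x ∧ G u x ≤ 1)
    (hmono : ∀ u v : X → ℝ, (∀ᵐ x ∂μ, u x ≤ v x) → ∀ᵐ x ∂μ, G u x ≤ G v x)
    -- continuity of the extended resolvent along monotone a.e. limits
    (hcont : ∀ (u : ℕ → X → ℝ) (v : X → ℝ),
      (∀ᵐ x ∂μ, Monotone fun n => u n x) →
      (∀ᵐ x ∂μ, Tendsto (fun n => u n x) atTop (𝓝 (v x))) →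
      ∀ᵐ x ∂μ, Tendsto (fun n => G (u n) x) atTop (𝓝 (G v x)))
    -- the Green formula hypothesis
    (hGreen : ∀ u ∈ DL, Integrable u μ → Integrable (Lop u) μ → ∫ x, Lop u x ∂μ = 0)
    -- a sequence `(eₙ) ⊆ D(Q)` with `0 ≤ eₙ ≤ 1` and `eₙ → 1` a.e.
    (e : ℕ → X → ℝ) (he : ∀ n, e n ∈ DQ)
    (he01 : ∀ n, ∀ᵐ x ∂μ, 0 ≤ e n x ∧ e n x ≤ 1)
    (helim : ∀ᵐ x ∂μ, Tendsto (fun n => e n x) atTop (𝓝 1))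
    -- a strictly positive `f ∈ L¹ ∩ L²`
    (f : X → ℝ) (hfpos : ∀ᵐ x ∂μ, 0 < f x)
    (hf1 : Integrable f μ) (hf2 : MemLp f 2 μ) :
    G (fun _ => 1) =ᵐ[μ] fun _ => 1 :=
  stmt_13_general μ DL Lop G hres hsym hmarkov hcont hGreen f hfpos hf1 hf2
end

section
/- Let $b$ be a weighted graph over $V$ with measure $m$, $\Omega \subseteq V$ finite, and let $e \in \widetilde{D}$ with $e = 0$ off $\Omega$ minimize $Q(u) = \widetilde{Q}_b(u)$ over $\{u : u(o) \geq 1, u|_{V\setminus\Omega} = 0\}$ for some $o \in \Omega$. Then $e$ is superharmonic on $\Omega$: $\widetilde{L}e(x) \geq 0$ for every $x \in \Omega$, where $\widetilde{L}e(x) = \frac{1}{m(x)}\sum_y b(x,y)(e(x)-e(y))$. -/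
open scoped Classical

set_option maxHeartbeats 1000000

/-- Summability of a function on `V × V` supported on the fiber `{x} × V`. -/
lemma aux_fiber1_summable {V : Type*} (x : V) (h : V → ℝ) (hh : Summable h) :
    Summable (fun p : V × V => if p.1 = x then h p.2 else 0) := by
  have hi : Function.Injective (fun y : V => ((x, y) : V × V)) := by
    intro a c hac; simpa using hac
  have hz : ∀ p ∉ Set.range (fun y : V => ((x, y) : V × V)),
      (fun p : V × V => if p.1 = x then h p.2 else 0) p = 0 := by
    rintro ⟨a, c⟩ hp
    simp only
    rw [if_neg]
    intro h1
    exact hp ⟨c, by simp [h1]⟩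
  rw [← hi.summable_iff hz]
  have : ((fun p : V × V => if p.1 = x then h p.2 else 0) ∘ fun y => (x, y)) = h := by
    funext y; simp
  rw [this]; exact hh

lemma aux_fiber1_tsum {V : Type*} (x : V) (h : V → ℝ) :
    ∑' p : V × V, (if p.1 = x then h p.2 else 0) = ∑' y, h y := by
  have hi : Function.Injective (fun y : V => ((x, y) : V × V)) := by
    intro a c hac; simpa using hac
  have hs : Function.support (fun p : V × V => if p.1 = x then h p.2 else 0) ⊆
      Set.range (fun y : V => ((x, y) : V × V)) := by
    rintro ⟨a, c⟩ hp
    by_cases h1 : a = x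
    · exact ⟨c, by simp [h1]⟩
    · simp [Function.mem_support, h1] at hp
  have := hi.tsum_eq (f := fun p : V × V => if p.1 = x then h p.2 else 0) hs
  simpa using this.symm

lemma aux_fiber2_summable {V : Type*} (x : V) (h : V → ℝ) (hh : Summable h) :
    Summable (fun p : V × V => if p.2 = x then h p.1 else 0) := by
  have hi : Function.Injective (fun y : V => ((y, x) : V × V)) := by
    intro a c hac; simpa using hac
  have hz : ∀ p ∉ Set.range (fun y : V => ((y, x) : V × V)),
      (fun p : V × V => if p.2 = x then h p.1 else 0) p = 0 := by
    rintro ⟨a, c⟩ hp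
    simp only
    rw [if_neg]
    intro h1
    exact hp ⟨a, by simp [h1]⟩
  rw [← hi.summable_iff hz]
  have : ((fun p : V × V => if p.2 = x then h p.1 else 0) ∘ fun y => (y, x)) = h := by
    funext y; simp
  rw [this]; exact hh

lemma aux_fiber2_tsum {V : Type*} (x : V) (h : V → ℝ) :
    ∑' p : V × V, (if p.2 = x then h p.1 else 0) = ∑' y, h y := by
  have hi : Function.Injective (fun y : V => ((y, x) : V × V)) := by
    intro a c hac; simpa using hac
  have hs : Function.support (fun p : V × V => if p.2 = x then h p.1 else 0) ⊆
      Set.range (fun y : V => ((y, x) : V × V)) := by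
    rintro ⟨a, c⟩ hp
    by_cases h1 : c = x
    · exact ⟨a, by simp [h1]⟩
    · simp [Function.mem_support, h1] at hp
  have := hi.tsum_eq (f := fun p : V × V => if p.2 = x then h p.1 else 0) hs
  simpa using this.symm

theorem stmt_15 {V : Type*} [Countable V]
    (b : V → V → ℝ) (m : V → ℝ)
    (hb0 : ∀ x y, 0 ≤ b x y) (hsym : ∀ x y, b x y = b y x) (hdiag : ∀ x, b x x = 0)
    (hrow : ∀ x, Summable (fun y => b x y)) (hm : ∀ x, 0 < m x)
    (Ω : Finset V) (o : V) (ho : o ∈ Ω)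
    (Q : (V → ℝ) → ℝ)
    (hQ : ∀ u : V → ℝ, Q u = (1 / 2) * ∑' p : V × V, b p.1 p.2 * (u p.1 - u p.2) ^ 2)
    (e : V → ℝ) (heo : 1 ≤ e o) (hesupp : ∀ x ∉ Ω, e x = 0)
    (hmin : ∀ u : V → ℝ, 1 ≤ u o → (∀ x ∉ Ω, u x = 0) → Q e ≤ Q u) :
    ∀ x ∈ Ω, 0 ≤ (1 / m x) * ∑' y, b x y * (e x - e y) := by
  intro x hx
  -- reduce to the unweighted Laplacian
  have hmx : (0:ℝ) < 1 / m x := one_div_pos.mpr (hm x)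
  refine mul_nonneg hmx.le ?_
  set L : ℝ := ∑' y, b x y * (e x - e y) with hLdef
  set C : ℝ := ∑' y, b x y with hCdef
  have hCnn : 0 ≤ C := tsum_nonneg fun y => hb0 x y
  -- summability of the Laplacian-type sums
  have hsumL : ∀ z : V, Summable (fun y => b z y * (e z - e y)) := by
    intro z
    have h1 : Summable (fun y => b z y * e z) := (hrow z).mul_right (e z)
    have h2 : Summable (fun y => b z y * e y) := by
      apply summable_of_ne_finset_zero (s := Ω)
      intro y hy
      simp [hesupp y hy]
    simpa [mul_sub] using h1.sub h2
  -- summability of the energy form of e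
  have hFe : Summable (fun p : V × V => b p.1 p.2 * (e p.1 - e p.2) ^ 2) := by
    have hf1 : Summable (fun p : V × V => b p.1 p.2 * e p.1 ^ 2) := by
      rw [summable_prod_of_nonneg (fun p => mul_nonneg (hb0 _ _) (sq_nonneg _))]
      constructor
      · intro z; simpa using (hrow z).mul_right (e z ^ 2)
      · apply summable_of_ne_finset_zero (s := Ω)
        intro z hz
        simp [hesupp z hz]
    have hf2 : Summable (fun p : V × V => b p.1 p.2 * e p.2 ^ 2) := by
      have := (Equiv.prodComm V V).summable_iff
        (f := fun p : V × V => b p.1 p.2 * e p.2 ^ 2)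
      rw [← this]
      have : (fun p : V × V => b p.1 p.2 * e p.2 ^ 2) ∘ (Equiv.prodComm V V)
          = fun p : V × V => b p.1 p.2 * e p.1 ^ 2 := by
        funext p
        simp [Equiv.prodComm, hsym p.2 p.1]
      rw [this]
      exact hf1
    have hf3 : Summable (fun p : V × V => b p.1 p.2 * (-2 * e p.1 * e p.2)) := by
      apply summable_of_ne_finset_zero (s := Ω ×ˢ Ω)
      rintro ⟨a, c⟩ hp
      rw [Finset.mem_product] at hp
      push_neg at hp
      by_cases ha : a ∈ Ω
      · simp [hesupp c (hp ha)]
      · simp [hesupp a ha]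
    have : (fun p : V × V => b p.1 p.2 * (e p.1 - e p.2) ^ 2)
        = fun p : V × V => b p.1 p.2 * e p.1 ^ 2 + b p.1 p.2 * e p.2 ^ 2
            + b p.1 p.2 * (-2 * e p.1 * e p.2) := by
      funext p; ring
    rw [this]
    exact (hf1.add hf2).add hf3
  -- the first-variation term G and second-variation term H
  set χ : V → ℝ := fun y => if y = x then 1 else 0 with hχ
  set G : V × V → ℝ := fun p => b p.1 p.2 * (e p.1 - e p.2) * (χ p.1 - χ p.2) with hG
  set H : V × V → ℝ := fun p => b p.1 p.2 * (χ p.1 - χ p.2) ^ 2 with hH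
  -- decomposition of G
  have hGdec : G = fun p : V × V =>
      (if p.1 = x then b x p.2 * (e x - e p.2) else 0)
        - (if p.2 = x then b p.1 x * (e p.1 - e x) else 0) := by
    funext p
    simp only [hG, hχ]
    by_cases h1 : p.1 = x <;> by_cases h2 : p.2 = x <;>
      simp [h1, h2, hdiag] <;> ring
  have hG1s := aux_fiber1_summable x (fun y => b x y * (e x - e y)) (hsumL x)
  have hG2s : Summable (fun p : V × V => if p.2 = x then b p.1 x * (e p.1 - e x) else 0) := by
    apply aux_fiber2_summable x (fun y => b y x * (e y - e x))
    have := hsumL x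
    have heq : (fun y => b y x * (e y - e x)) = fun y => -(b x y * (e x - e y)) := by
      funext y; rw [hsym y x]; ring
    rw [heq]
    exact this.neg
  have hGs : Summable G := by rw [hGdec]; exact hG1s.sub hG2s
  have hGt : ∑' p, G p = 2 * L := by
    simp only [hGdec]
    rw [Summable.tsum_sub hG1s hG2s]
    rw [show (∑' p : V × V, if p.1 = x then b x p.2 * (e x - e p.2) else 0)
        = ∑' y, b x y * (e x - e y) from aux_fiber1_tsum x (fun y => b x y * (e x - e y))]
    rw [show (∑' p : V × V, if p.2 = x then b p.1 x * (e p.1 - e x) else 0)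
        = ∑' y, b y x * (e y - e x) from aux_fiber2_tsum x (fun y => b y x * (e y - e x))]
    have heq : (fun y => b y x * (e y - e x)) = fun y => -(b x y * (e x - e y)) := by
      funext y; rw [hsym y x]; ring
    rw [heq, tsum_neg]
    rw [hLdef]
    ring
  -- decomposition of H
  have hHdec : H = fun p : V × V =>
      (if p.1 = x then b x p.2 else 0) + (if p.2 = x then b p.1 x else 0) := by
    funext p
    simp only [hH, hχ]
    by_cases h1 : p.1 = x <;> by_cases h2 : p.2 = x <;>
      simp [h1, h2] <;> simp [h1, h2, hdiag] <;> ring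
  have hH1s := aux_fiber1_summable x (fun y => b x y) (hrow x)
  have hH2s : Summable (fun p : V × V => if p.2 = x then b p.1 x else 0) := by
    apply aux_fiber2_summable x (fun y => b y x)
    have heq : (fun y => b y x) = fun y => b x y := by funext y; rw [hsym]
    rw [heq]; exact hrow x
  have hHs : Summable H := by rw [hHdec]; exact hH1s.add hH2s
  have hHt : ∑' p, H p = 2 * C := by
    simp only [hHdec]
    rw [Summable.tsum_add hH1s hH2s]
    rw [show (∑' p : V × V, if p.1 = x then b x p.2 else 0)
        = ∑' y, b x y from aux_fiber1_tsum x (fun y => b x y)]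
    rw [show (∑' p : V × V, if p.2 = x then b p.1 x else 0)
        = ∑' y, b y x from aux_fiber2_tsum x (fun y => b y x)]
    have heq : (fun y => b y x) = fun y => b x y := by funext y; rw [hsym]
    rw [heq, hCdef]
    ring
  -- the key inequality from minimality
  have key : ∀ ε : ℝ, 0 < ε → 0 ≤ 2 * ε * L + ε ^ 2 * C := by
    intro ε hε
    set u : V → ℝ := fun y => e y + ε * χ y with hu
    have huo : 1 ≤ u o := by
      by_cases h : o = x
      · simp only [hu, hχ, if_pos h]
        nlinarith
      · simp [hu, hχ, h, heo]
    have husupp : ∀ y ∉ Ω, u y = 0 := by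
      intro y hy
      have hyx : y ≠ x := fun h => hy (h ▸ hx)
      simp [hu, hχ, hyx, hesupp y hy]
    have hmin' := hmin u huo husupp
    rw [hQ, hQ] at hmin'
    have hexp : (fun p : V × V => b p.1 p.2 * (u p.1 - u p.2) ^ 2)
        = fun p : V × V => b p.1 p.2 * (e p.1 - e p.2) ^ 2 + ((2 * ε) * G p + ε ^ 2 * H p) := by
      funext p
      simp only [hu, hG, hH]
      ring
    rw [hexp, Summable.tsum_add hFe ((hGs.mul_left _).add (hHs.mul_left _)),
      Summable.tsum_add (hGs.mul_left _) (hHs.mul_left _), tsum_mul_left, tsum_mul_left,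
      hGt, hHt] at hmin'
    nlinarith [hmin']
  -- conclude 0 ≤ L
  have key2 : ∀ ε : ℝ, 0 < ε → 0 ≤ 2 * L + ε * C := by
    intro ε hε
    have h := key ε hε
    nlinarith
  by_contra hneg
  push_neg at hneg
  have hLpos : 0 < -L := by linarith
  rcases eq_or_lt_of_le hCnn with hC0 | hCpos
  · have := key2 1 one_pos
    rw [← hC0] at this
    linarith
  · have hεpos : 0 < -L / C := div_pos hLpos hCpos
    have := key2 (-L / C) hεpos
    rw [div_mul_cancel₀ _ (ne_of_gt hCpos)] at this
    linarith
end
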